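/- Let A_0, …, A_k ⊆ ℤ^n be full-dimensional configurations such that conv(A_0 + … + A_k) has an interior lattice point, and suppose there exists a lattice projection ρ : ℤ^{n+k} → ℤ^r mapping the Cayley sum A_0 * … * A_k onto Δ_r. Then k ≥ r. -/

import Mathlib

open scoped Pointwise

/-- The lattice `ℤ^n`. -/
abbrev ZLat (n : ℕ) := Fin n → ℤ

/-- Inclusion of `ℤ^n` into `ℝ^n`. -/
def toR {n : ℕ} (v : ZLat n) : Fin n → ℝ := fun i => (v i : ℝ)

/-- The dimension of a configuration: the dimension of its affine hull in `ℝ^n`. -/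
noncomputable def confDim {n : ℕ} (A : Finset (ZLat n)) : ℕ :=
  Module.finrank ℝ (affineSpan ℝ (toR '' (A : Set (ZLat n)))).direction

/-- `cayleyE k i` is `e_i ∈ ℤ^k`, where `e_0 = 0` and `e_1, …, e_k` are the
standard basis vectors. -/
def cayleyE (k : ℕ) (i : Fin (k + 1)) : ZLat k :=
  fun j => if (j : ℕ) + 1 = (i : ℕ) then 1 else 0

/-- The Cayley sum `A_0 * ⋯ * A_k ⊆ ℤ^{n+k}` of configurations `A_0, …, A_k ⊆ ℤ^n`. -/
def cayley {n k : ℕ} (A : Fin (k + 1) → Finset (ZLat n)) : Finset (ZLat (n + k)) :=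
  Finset.univ.biUnion fun i => (A i).image fun a => Fin.append a (cayleyE k i)

/-- The vertex set `Δ_k = {e_0, e_1, …, e_k} ⊆ ℤ^k` of the standard unimodular simplex. -/
def stdSimplexConfig (k : ℕ) : Finset (ZLat k) := Finset.univ.image (cayleyE k)

/-- The subgroup `⟨A - A⟩ ⊆ ℤ^n` generated by all differences of elements of `A`. -/
def diffSpan {n : ℕ} (A : Finset (ZLat n)) : AddSubgroup (ZLat n) :=
  AddSubgroup.closure {d | ∃ a ∈ A, ∃ b ∈ A, d = a - b}

/-- A family `A_0, …, A_k ⊆ ℤ^n` is spanning if `⟨A_0-A_0⟩ + ⋯ + ⟨A_k-A_k⟩ = ℤ^n`. -/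
def IsSpanningFamily {n k : ℕ} (A : Fin (k + 1) → Finset (ZLat n)) : Prop :=
  (⨆ i, diffSpan (A i)) = ⊤

/-- The Cayley sum of `A_0, …, A_k` is of join type if the natural homomorphism
`⟨A_0-A_0⟩ ⊕ ⋯ ⊕ ⟨A_k-A_k⟩ → ℤ^n`, `(a_0, …, a_k) ↦ a_0 + ⋯ + a_k`, is injective. -/
def JoinType {n k : ℕ} (A : Fin (k + 1) → Finset (ZLat n)) : Prop :=
  ∀ d : Fin (k + 1) → ZLat n, (∀ i, d i ∈ diffSpan (A i)) → ∑ i, d i = 0 → ∀ i, d i = 0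

/-- The lattice points of the affine hull of `A`, i.e. `aff(A) ∩ ℤ^n`. -/
def affLat {n : ℕ} (A : Finset (ZLat n)) : Set (ZLat n) :=
  {x | toR x ∈ affineSpan ℝ (toR '' (A : Set (ZLat n)))}

/-- Two configurations `A ⊆ ℤ^n`, `B ⊆ ℤ^m` are isomorphic if there is an affine
lattice isomorphism `aff(A) ∩ ℤ^n → aff(B) ∩ ℤ^m` mapping `A` onto `B`. -/
def ConfigIso {n m : ℕ} (A : Finset (ZLat n)) (B : Finset (ZLat m)) : Prop :=
  ∃ f : ZLat n → ZLat m, ∃ g : ZLat m → ZLat n,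
    (∀ x ∈ affLat A, f x ∈ affLat B) ∧
    (∀ y ∈ affLat B, g y ∈ affLat A) ∧
    (∀ x ∈ affLat A, g (f x) = x) ∧
    (∀ y ∈ affLat B, f (g y) = y) ∧
    (∀ x y z, x ∈ affLat A → y ∈ affLat A → z ∈ affLat A →
      f (x + y - z) = f x + f y - f z) ∧
    f '' (A : Set (ZLat n)) = (B : Set (ZLat m))

/-- `F` is a face of the configuration `A`: the intersection of a face of the
polytope `conv(A)` with `A` (the empty face and `A` itself are allowed). -/
def IsFaceOf {n : ℕ} (F A : Finset (ZLat n)) : Prop :=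
  F = ∅ ∨ (F ⊆ A ∧ ∃ l : (Fin n → ℝ) →ₗ[ℝ] ℝ,
    (F : Set (ZLat n)) = {x ∈ (A : Set (ZLat n)) | ∀ y ∈ A, l (toR y) ≤ l (toR x)})

/-- Faces `F_0, …, F_k` of `A` covering `A` form a Cayley decomposition of `A` if
there is a lattice projection `π : ℤ^n → ℤ^k` with `π(F_i) ⊆ {e_i}` for all `i`. -/
def IsCayleyDecomp {n k : ℕ} (A : Finset (ZLat n)) (F : Fin (k + 1) → Finset (ZLat n)) : Prop :=
  (∀ i, IsFaceOf (F i) A) ∧ (∀ a ∈ A, ∃ i, a ∈ F i) ∧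
    ∃ π : ZLat n →+ ZLat k, Function.Surjective π ∧ ∀ i, ∀ x ∈ F i, π x = cayleyE k i

/-- `conv(A)` contains an interior lattice point. -/
def HasIntLatPt {n : ℕ} (A : Finset (ZLat n)) : Prop :=
  ∃ x : ZLat n, toR x ∈ interior (convexHull ℝ (toR '' (A : Set (ZLat n))))

/-- The dilate `c · conv(A)` contains an interior lattice point. -/
def HasIntLatPtDilate {n : ℕ} (c : ℕ) (A : Finset (ZLat n)) : Prop :=
  ∃ x : ZLat n, toR x ∈ interior ((c : ℝ) • convexHull ℝ (toR '' (A : Set (ZLat n))))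

/-- The codegree of the lattice polytope `conv(A)`: the smallest `c ≥ 1` such that
`c · conv(A)` has an interior lattice point. -/
noncomputable def codeg {n : ℕ} (A : Finset (ZLat n)) : ℕ :=
  sInf {c : ℕ | 1 ≤ c ∧ HasIntLatPtDilate c A}

/-!
Let `x` be the interior lattice point of `conv(A_0 + ⋯ + A_k)`. Split a functional on
`ℤ^{n+k}` as `L(v, w) = L₁ v + L₂ w`. If `L ≤ c` on the Cayley sum, then
`L₁ ≤ ∑ i, (c - L₂ e_i)` on `A_0 + ⋯ + A_k`, with strict inequality at `x` unless `L₁ = 0`,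
and in that case `L` is constant on each `A_i × {e_i}`. So `L (x, 1, …, 1) < (k + 1) c` as soon
as `L` is not identically `c` on the Cayley sum. Composing with `ρ`, the integer point
`ρ (x, 1, …, 1)` lies in the interior of `(k + 1) • conv(Δ_r)`: its `r` coordinates are `≥ 1`
and sum to at most `k`.
-/
theorem LinearMap.lt_of_mem_interior_of_forall_le {E : Type*} [NormedAddCommGroup E]
    [NormedSpace ℝ E] [FiniteDimensional ℝ E] {φ : E →ₗ[ℝ] ℝ} (hφ : φ ≠ 0) {s : Set E} {M : ℝ}
    (hs : ∀ y ∈ s, φ y ≤ M) {x : E} (hx : x ∈ interior s) : φ x < M := by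
  obtain ⟨v, hv⟩ : ∃ v, φ v ≠ 0 := by
    by_contra! h
    exact hφ (LinearMap.ext h)
  have hsurj : Function.Surjective φ := fun t => ⟨(t / φ v) • v, by simp [hv]⟩
  have hφx : φ x ∈ interior (φ '' s) :=
    (φ.isOpenMap_of_finiteDimensional hsurj).image_interior_subset s ⟨x, hx, rfl⟩
  have hsub : φ '' s ⊆ Set.Iic M := by
    rintro _ ⟨y, hy, rfl⟩
    exact hs y hy
  simpa using interior_mono hsub hφx

theorem Finset.exists_forall_mem_of_mem_fintype_sum {ι α : Type*} [Fintype ι] [DecidableEq α]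
    [AddCommMonoid α] {A : ι → Finset α} {s : α} (hs : s ∈ ∑ i, A i) :
    ∃ a : ι → α, (∀ i, a i ∈ A i) ∧ ∑ i, a i = s := by
  rw [← Finset.mem_coe, Finset.coe_sum, Set.mem_fintype_sum] at hs
  obtain ⟨a, ha, rfl⟩ := hs
  exact ⟨a, ha, rfl⟩

theorem Fin.append_add_append {α : Type*} [Add α] {m n : ℕ} (v v' : Fin m → α)
    (w w' : Fin n → α) : Fin.append (v + v') (w + w') = Fin.append v w + Fin.append v' w' := by
  funext j
  refine Fin.addCases (fun i => ?_) (fun i => ?_) j <;> simp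

def Fin.appendAddMonoidHom {α : Type*} [AddMonoid α] (m n : ℕ) :
    (Fin m → α) × (Fin n → α) →+ (Fin (m + n) → α) where
  toFun p := Fin.append p.1 p.2
  map_zero' := by
    funext j
    refine Fin.addCases (fun i => ?_) (fun i => ?_) j <;> simp
  map_add' p q := Fin.append_add_append p.1 q.1 p.2 q.2

theorem AddMonoidHom.apply_eq_sum_single {n : ℕ} (L : ZLat n →+ ℤ) (v : ZLat n) :
    L v = ∑ m, v m * L (Pi.single m 1) := by
  conv_lhs => rw [← Finset.univ_sum_single v]
  rw [map_sum]
  refine Finset.sum_congr rfl fun m _ => ?_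
  rw [← smul_eq_mul, ← map_zsmul, ← Pi.single_smul, smul_eq_mul, mul_one]

noncomputable def AddMonoidHom.realExt {n : ℕ} (L : ZLat n →+ ℤ) : (Fin n → ℝ) →ₗ[ℝ] ℝ :=
  ∑ m, (L (Pi.single m 1) : ℝ) • LinearMap.proj m

theorem AddMonoidHom.realExt_toR {n : ℕ} (L : ZLat n →+ ℤ) (v : ZLat n) :
    L.realExt (toR v) = L v := by
  rw [L.apply_eq_sum_single v]
  simp [AddMonoidHom.realExt, toR, mul_comm]

theorem AddMonoidHom.lt_of_mem_interior_convexHull {n : ℕ} {T : Finset (ZLat n)} {x : ZLat n}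
    (hx : toR x ∈ interior (convexHull ℝ (toR '' (T : Set (ZLat n)))))
    {L : ZLat n →+ ℤ} (hL : L ≠ 0) {M : ℤ} (hM : ∀ t ∈ T, L t ≤ M) : L x < M := by
  have hφ : L.realExt ≠ 0 := by
    intro h
    refine hL (AddMonoidHom.ext fun v => ?_)
    have hv : (L v : ℝ) = 0 := by rw [← L.realExt_toR, h, LinearMap.zero_apply]
    exact_mod_cast hv
  have hhull : ∀ y ∈ convexHull ℝ (toR '' (T : Set (ZLat n))), L.realExt y ≤ M := by
    refine fun y hy => convexHull_min ?_ (convex_halfSpace_le L.realExt.isLinear (M : ℝ)) hy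
    rintro _ ⟨t, ht, rfl⟩
    simpa [L.realExt_toR] using hM t ht
  have := LinearMap.lt_of_mem_interior_of_forall_le hφ hhull hx
  rw [L.realExt_toR] at this
  exact_mod_cast this

section cayleyE

variable {k : ℕ}

@[simp]
theorem cayleyE_zero : cayleyE k 0 = 0 := by
  funext j
  simp [cayleyE]

@[simp]
theorem cayleyE_succ (i : Fin k) : cayleyE k i.succ = Pi.single i 1 := by
  funext j
  simp [cayleyE, Pi.single_apply, Fin.ext_iff]

theorem cayleyE_nonneg (i : Fin (k + 1)) (j : Fin k) : 0 ≤ cayleyE k i j := by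
  unfold cayleyE
  split_ifs <;> simp

theorem sum_cayleyE : ∑ i, cayleyE k i = 1 := by
  simpa [Fin.sum_univ_succ] using Finset.univ_sum_single (1 : ZLat k)

end cayleyE

theorem mem_cayley {n k : ℕ} {A : Fin (k + 1) → Finset (ZLat n)} {p : ZLat (n + k)} :
    p ∈ cayley A ↔ ∃ i, ∃ a ∈ A i, Fin.append a (cayleyE k i) = p := by
  simp [cayley]

theorem mem_stdSimplexConfig {r : ℕ} {q : ZLat r} :
    q ∈ stdSimplexConfig r ↔ ∃ i, cayleyE r i = q := by
  simp [stdSimplexConfig]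

/-- The hypothesis says that `y` is an interior point of `(k + 1) • conv(Δ_r)`. -/
theorem le_of_forall_stdSimplexConfig_lt {r k : ℕ} (y : ZLat r)
    (h : ∀ (l : ZLat r →+ ℤ) (c : ℤ), (∀ q ∈ stdSimplexConfig r, l q ≤ c) →
      (∃ q ∈ stdSimplexConfig r, l q < c) → l y < (k + 1) * c) :
    r ≤ k := by
  have hpos : ∀ j, 1 ≤ y j := by
    intro j
    have := h (-Pi.evalAddMonoidHom (fun _ => ℤ) j) 0 ?_ ⟨cayleyE r j.succ, ?_, ?_⟩
    · simp only [AddMonoidHom.neg_apply, Pi.evalAddMonoidHom_apply, mul_zero,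
        Int.neg_neg_iff_pos] at this
      omega
    · intro q hq
      obtain ⟨i, rfl⟩ := mem_stdSimplexConfig.1 hq
      simpa using cayleyE_nonneg i j
    · exact mem_stdSimplexConfig.2 ⟨_, rfl⟩
    · simp
  have hsum : ∑ j, y j < k + 1 := by
    have := h (∑ j, Pi.evalAddMonoidHom (fun _ => ℤ) j) 1 ?_ ⟨0, ?_, ?_⟩
    · simpa using this
    · intro q hq
      obtain ⟨i, rfl⟩ := mem_stdSimplexConfig.1 hq
      refine Fin.cases ?_ (fun i => ?_) i <;> simp
    · exact mem_stdSimplexConfig.2 ⟨0, cayleyE_zero⟩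
    · simp
  have : (r : ℤ) ≤ k := by
    calc (r : ℤ) = ∑ _j : Fin r, 1 := by simp
      _ ≤ ∑ j, y j := Finset.sum_le_sum fun j _ => hpos j
      _ ≤ k := by omega
  exact_mod_cast this

theorem apply_append_one_lt_of_mem_interior {n k : ℕ} {A : Fin (k + 1) → Finset (ZLat n)}
    {x : ZLat n} (hx : toR x ∈ interior (convexHull ℝ (toR '' ((∑ i, A i : Finset _) : Set _))))
    (L : ZLat (n + k) →+ ℤ) (c : ℤ) (hle : ∀ p ∈ cayley A, L p ≤ c)
    (hlt : ∃ p ∈ cayley A, L p < c) :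
    L (Fin.append x 1) < (k + 1) * c := by
  set L₁ := (L.comp (Fin.appendAddMonoidHom n k)).comp (AddMonoidHom.inl _ _)
  set L₂ := (L.comp (Fin.appendAddMonoidHom n k)).comp (AddMonoidHom.inr _ _)
  have hsplit : ∀ v w, L (Fin.append v w) = L₁ v + L₂ w := by
    intro v w
    simp only [L₁, L₂, AddMonoidHom.comp_apply, ← map_add, AddMonoidHom.inl_apply,
      AddMonoidHom.inr_apply, Prod.mk_add_mk, add_zero, zero_add]
    rfl
  have hcay : ∀ i, ∀ a ∈ A i, L₁ a + L₂ (cayleyE k i) ≤ c := fun i a ha =>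
    hsplit a _ ▸ hle _ (mem_cayley.2 ⟨i, a, ha, rfl⟩)
  obtain ⟨σ, hσ⟩ : (∑ i, A i).Nonempty := by
    by_contra! h
    simp [h] at hx
  obtain ⟨b, hb, -⟩ := Finset.exists_forall_mem_of_mem_fintype_sum hσ
  have hx_eq : L (Fin.append x 1) = L₁ x + ∑ i, L₂ (cayleyE k i) := by
    rw [hsplit, ← sum_cayleyE, map_sum]
  by_cases hL₁ : L₁ = 0
  · obtain ⟨_, hp, hLp⟩ := hlt
    obtain ⟨i₀, a, ha, rfl⟩ := mem_cayley.1 hp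
    have hlt' : ∑ i, L₂ (cayleyE k i) < ∑ _i : Fin (k + 1), c := by
      refine Finset.sum_lt_sum (fun i _ => ?_) ⟨i₀, Finset.mem_univ _, ?_⟩
      · simpa [hL₁] using hcay i (b i) (hb i)
      · simpa [hsplit, hL₁] using hLp
    simp only [hx_eq, hL₁, AddMonoidHom.zero_apply, zero_add] at hlt' ⊢
    simpa using hlt'
  · have hbound : ∀ s ∈ ∑ i, A i, L₁ s ≤ ∑ i, (c - L₂ (cayleyE k i)) := by
      intro s hs
      obtain ⟨a, ha, rfl⟩ := Finset.exists_forall_mem_of_mem_fintype_sum hs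
      rw [map_sum]
      exact Finset.sum_le_sum fun i _ => le_sub_iff_add_le.2 (hcay i (a i) (ha i))
    have := AddMonoidHom.lt_of_mem_interior_convexHull hx hL₁ hbound
    simp only [Finset.sum_sub_distrib, Finset.sum_const, Finset.card_univ, Fintype.card_fin,
      nsmul_eq_mul] at this
    push_cast at this
    linarith

theorem k_ge_r_of_projection_onto_simplex_general {n k r : ℕ}
    (A : Fin (k + 1) → Finset (ZLat n))
    (hint : HasIntLatPt (∑ i, A i))
    (ρ : ZLat (n + k) →+ ZLat r)
    (him : (cayley A).image ρ = stdSimplexConfig r) :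
    r ≤ k := by
  obtain ⟨x, hx⟩ := hint
  refine le_of_forall_stdSimplexConfig_lt (ρ (Fin.append x 1)) fun l c hle hlt => ?_
  refine apply_append_one_lt_of_mem_interior hx (l.comp ρ) c
    (fun p hp => hle _ (him ▸ Finset.mem_image_of_mem ρ hp)) ?_
  obtain ⟨q, hq, hlq⟩ := hlt
  obtain ⟨p, hp, rfl⟩ := Finset.mem_image.1 (him ▸ hq)
  exact ⟨p, hp, hlq⟩

/-- Let `A_0, …, A_k ⊆ ℤ^n` be full-dimensional configurations such
that `conv(A_0 + ⋯ + A_k)` has an interior lattice point, and suppose a lattice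
projection `ρ : ℤ^{n+k} → ℤ^r` maps `A_0 * ⋯ * A_k` onto `Δ_r`. Then `k ≥ r`. -/
theorem k_ge_r_of_projection_onto_simplex {n k r : ℕ}
    (A : Fin (k + 1) → Finset (ZLat n)) (hfull : ∀ i, confDim (A i) = n)
    (hint : HasIntLatPt (∑ i, A i))
    (ρ : ZLat (n + k) →+ ZLat r) (hρ : Function.Surjective ρ)
    (him : (cayley A).image ρ = stdSimplexConfig r) :
    r ≤ k :=
  k_ge_r_of_projection_onto_simplex_general A hint ρ him
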